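/- arXiv:1902.01443 — 2 statements merged into one kernel-verified Lean document; each statement's English description precedes it below -/
import Mathlib

section
/- In the two-unit front-door network model with all kernels strictly positive, for every intervention value (a₁, a₂) and every y₂, the interventional distribution satisfies p(Y₂ = y₂ | do(a₁, a₂)) = Σ_{c₁,c₂,m₁,m₂} pV(m₁,m₂ | a₁,a₂,c₁,c₂) · [Σ_{α₂ ∈ A₂} pV(y₂ | a₁, α₂, m₂, c₂) · pV(α₂ | c₂)] · pV(c₁) · pV(c₂), where all conditionals on the right-hand side are ratios of marginal sums of the observed margin pV. (Instance of Theorem 2; equation (3) of the paper) -/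
open scoped Classical

noncomputable section

/-- The two-unit front-door network model: finite nonempty state spaces for
baseline covariates `C`, unobserved confounders `U`, treatments `A`,
mediators `M` and outcomes `Y` of two units, together with the probability
kernels of the model (each nonnegative and summing to 1 over its first
argument). -/
structure TwoUnitFrontDoor (C₁ C₂ U₁ U₂ A₁ A₂ M₁ M₂ Y₁ Y₂ : Type)
    [Fintype C₁] [Fintype C₂] [Fintype U₁] [Fintype U₂] [Fintype A₁] [Fintype A₂]
    [Fintype M₁] [Fintype M₂] [Fintype Y₁] [Fintype Y₂]
    [Nonempty C₁] [Nonempty C₂] [Nonempty U₁] [Nonempty U₂] [Nonempty A₁] [Nonempty A₂]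
    [Nonempty M₁] [Nonempty M₂] [Nonempty Y₁] [Nonempty Y₂] where
  pC1 : C₁ → ℝ
  pC2 : C₂ → ℝ
  pU1 : U₁ → ℝ
  pU2 : U₂ → ℝ
  pA1 : A₁ → C₁ → U₁ → ℝ
  pA2 : A₂ → C₂ → U₂ → ℝ
  pM : M₁ → M₂ → A₁ → A₂ → C₁ → C₂ → ℝ
  pY1 : Y₁ → C₁ → U₁ → M₁ → A₂ → ℝ
  pY2 : Y₂ → C₂ → U₂ → M₂ → A₁ → ℝ
  pC1_nonneg : ∀ c₁, 0 ≤ pC1 c₁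
  pC1_sum : ∑ c₁, pC1 c₁ = 1
  pC2_nonneg : ∀ c₂, 0 ≤ pC2 c₂
  pC2_sum : ∑ c₂, pC2 c₂ = 1
  pU1_nonneg : ∀ u₁, 0 ≤ pU1 u₁
  pU1_sum : ∑ u₁, pU1 u₁ = 1
  pU2_nonneg : ∀ u₂, 0 ≤ pU2 u₂
  pU2_sum : ∑ u₂, pU2 u₂ = 1
  pA1_nonneg : ∀ a₁ c₁ u₁, 0 ≤ pA1 a₁ c₁ u₁
  pA1_sum : ∀ c₁ u₁, ∑ a₁, pA1 a₁ c₁ u₁ = 1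
  pA2_nonneg : ∀ a₂ c₂ u₂, 0 ≤ pA2 a₂ c₂ u₂
  pA2_sum : ∀ c₂ u₂, ∑ a₂, pA2 a₂ c₂ u₂ = 1
  pM_nonneg : ∀ m₁ m₂ a₁ a₂ c₁ c₂, 0 ≤ pM m₁ m₂ a₁ a₂ c₁ c₂
  pM_sum : ∀ a₁ a₂ c₁ c₂, ∑ m₁, ∑ m₂, pM m₁ m₂ a₁ a₂ c₁ c₂ = 1
  pY1_nonneg : ∀ y₁ c₁ u₁ m₁ a₂, 0 ≤ pY1 y₁ c₁ u₁ m₁ a₂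
  pY1_sum : ∀ c₁ u₁ m₁ a₂, ∑ y₁, pY1 y₁ c₁ u₁ m₁ a₂ = 1
  pY2_nonneg : ∀ y₂ c₂ u₂ m₂ a₁, 0 ≤ pY2 y₂ c₂ u₂ m₂ a₁
  pY2_sum : ∀ c₂ u₂ m₂ a₁, ∑ y₂, pY2 y₂ c₂ u₂ m₂ a₁ = 1

namespace TwoUnitFrontDoor

variable {C₁ C₂ U₁ U₂ A₁ A₂ M₁ M₂ Y₁ Y₂ : Type}
    [Fintype C₁] [Fintype C₂] [Fintype U₁] [Fintype U₂] [Fintype A₁] [Fintype A₂]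
    [Fintype M₁] [Fintype M₂] [Fintype Y₁] [Fintype Y₂]
    [Nonempty C₁] [Nonempty C₂] [Nonempty U₁] [Nonempty U₂] [Nonempty A₁] [Nonempty A₂]
    [Nonempty M₁] [Nonempty M₂] [Nonempty Y₁] [Nonempty Y₂]
    (ℳ : TwoUnitFrontDoor C₁ C₂ U₁ U₂ A₁ A₂ M₁ M₂ Y₁ Y₂)

/-- All the kernels of the model are strictly positive. -/
def StrictlyPositive : Prop :=
  (∀ c₁, 0 < ℳ.pC1 c₁) ∧ (∀ c₂, 0 < ℳ.pC2 c₂) ∧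
  (∀ u₁, 0 < ℳ.pU1 u₁) ∧ (∀ u₂, 0 < ℳ.pU2 u₂) ∧
  (∀ a₁ c₁ u₁, 0 < ℳ.pA1 a₁ c₁ u₁) ∧ (∀ a₂ c₂ u₂, 0 < ℳ.pA2 a₂ c₂ u₂) ∧
  (∀ m₁ m₂ a₁ a₂ c₁ c₂, 0 < ℳ.pM m₁ m₂ a₁ a₂ c₁ c₂) ∧
  (∀ y₁ c₁ u₁ m₁ a₂, 0 < ℳ.pY1 y₁ c₁ u₁ m₁ a₂) ∧
  (∀ y₂ c₂ u₂ m₂ a₁, 0 < ℳ.pY2 y₂ c₂ u₂ m₂ a₁)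

/-- The full joint distribution of the model. -/
def joint (c₁ : C₁) (c₂ : C₂) (u₁ : U₁) (u₂ : U₂) (a₁ : A₁) (a₂ : A₂)
    (m₁ : M₁) (m₂ : M₂) (y₁ : Y₁) (y₂ : Y₂) : ℝ :=
  ℳ.pC1 c₁ * ℳ.pC2 c₂ * ℳ.pU1 u₁ * ℳ.pU2 u₂ *
    ℳ.pA1 a₁ c₁ u₁ * ℳ.pA2 a₂ c₂ u₂ * ℳ.pM m₁ m₂ a₁ a₂ c₁ c₂ *
    ℳ.pY1 y₁ c₁ u₁ m₁ a₂ * ℳ.pY2 y₂ c₂ u₂ m₂ a₁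

/-- The observed margin `pV`, summing out the unobserved confounders. -/
def pV (c₁ : C₁) (c₂ : C₂) (a₁ : A₁) (a₂ : A₂) (m₁ : M₁) (m₂ : M₂)
    (y₁ : Y₁) (y₂ : Y₂) : ℝ :=
  ∑ u₁ : U₁, ∑ u₂ : U₂, ℳ.joint c₁ c₂ u₁ u₂ a₁ a₂ m₁ m₂ y₁ y₂

/-- The observed marginal `pV(c₁)`. -/
def pVc1 (c₁ : C₁) : ℝ :=
  ∑ c₂ : C₂, ∑ a₁ : A₁, ∑ a₂ : A₂, ∑ m₁ : M₁, ∑ m₂ : M₂, ∑ y₁ : Y₁, ∑ y₂ : Y₂,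
    ℳ.pV c₁ c₂ a₁ a₂ m₁ m₂ y₁ y₂

/-- The observed marginal `pV(c₂)`. -/
def pVc2 (c₂ : C₂) : ℝ :=
  ∑ c₁ : C₁, ∑ a₁ : A₁, ∑ a₂ : A₂, ∑ m₁ : M₁, ∑ m₂ : M₂, ∑ y₁ : Y₁, ∑ y₂ : Y₂,
    ℳ.pV c₁ c₂ a₁ a₂ m₁ m₂ y₁ y₂

/-- The observed conditional `pV(a₁ | c₁)`. -/
def pVa1 (a₁ : A₁) (c₁ : C₁) : ℝ :=
  (∑ c₂ : C₂, ∑ a₂ : A₂, ∑ m₁ : M₁, ∑ m₂ : M₂, ∑ y₁ : Y₁, ∑ y₂ : Y₂,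
    ℳ.pV c₁ c₂ a₁ a₂ m₁ m₂ y₁ y₂) / ℳ.pVc1 c₁

/-- The observed conditional `pV(a₂ | c₂)`. -/
def pVa2 (a₂ : A₂) (c₂ : C₂) : ℝ :=
  (∑ c₁ : C₁, ∑ a₁ : A₁, ∑ m₁ : M₁, ∑ m₂ : M₂, ∑ y₁ : Y₁, ∑ y₂ : Y₂,
    ℳ.pV c₁ c₂ a₁ a₂ m₁ m₂ y₁ y₂) / ℳ.pVc2 c₂

/-- The observed conditional `pV(m₁, m₂ | a₁, a₂, c₁, c₂)`. -/
def pVm (m₁ : M₁) (m₂ : M₂) (a₁ : A₁) (a₂ : A₂) (c₁ : C₁) (c₂ : C₂) : ℝ :=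
  (∑ y₁ : Y₁, ∑ y₂ : Y₂, ℳ.pV c₁ c₂ a₁ a₂ m₁ m₂ y₁ y₂) /
    (∑ m₁' : M₁, ∑ m₂' : M₂, ∑ y₁ : Y₁, ∑ y₂ : Y₂, ℳ.pV c₁ c₂ a₁ a₂ m₁' m₂' y₁ y₂)

/-- The observed conditional `pV(y₁ | a₁, a₂, m₁, m₂, c₁, c₂)`. -/
def pVy1Full (y₁ : Y₁) (a₁ : A₁) (a₂ : A₂) (m₁ : M₁) (m₂ : M₂) (c₁ : C₁) (c₂ : C₂) : ℝ :=
  (∑ y₂ : Y₂, ℳ.pV c₁ c₂ a₁ a₂ m₁ m₂ y₁ y₂) /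
    (∑ y₁' : Y₁, ∑ y₂ : Y₂, ℳ.pV c₁ c₂ a₁ a₂ m₁ m₂ y₁' y₂)

/-- The observed conditional `pV(y₂ | a₁, a₂, m₁, m₂, c₁, c₂)`. -/
def pVy2Full (y₂ : Y₂) (a₁ : A₁) (a₂ : A₂) (m₁ : M₁) (m₂ : M₂) (c₁ : C₁) (c₂ : C₂) : ℝ :=
  (∑ y₁ : Y₁, ℳ.pV c₁ c₂ a₁ a₂ m₁ m₂ y₁ y₂) /
    (∑ y₁ : Y₁, ∑ y₂' : Y₂, ℳ.pV c₁ c₂ a₁ a₂ m₁ m₂ y₁ y₂')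

/-- The observed conditional `pV(y₁ | a₁, a₂, m₁, c₁)`. -/
def pVy1 (y₁ : Y₁) (a₁ : A₁) (a₂ : A₂) (m₁ : M₁) (c₁ : C₁) : ℝ :=
  (∑ c₂ : C₂, ∑ m₂ : M₂, ∑ y₂ : Y₂, ℳ.pV c₁ c₂ a₁ a₂ m₁ m₂ y₁ y₂) /
    (∑ c₂ : C₂, ∑ m₂ : M₂, ∑ y₁' : Y₁, ∑ y₂ : Y₂, ℳ.pV c₁ c₂ a₁ a₂ m₁ m₂ y₁' y₂)

/-- The observed conditional `pV(y₂ | a₁, a₂, m₂, c₂)`. -/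
def pVy2 (y₂ : Y₂) (a₁ : A₁) (a₂ : A₂) (m₂ : M₂) (c₂ : C₂) : ℝ :=
  (∑ c₁ : C₁, ∑ m₁ : M₁, ∑ y₁ : Y₁, ℳ.pV c₁ c₂ a₁ a₂ m₁ m₂ y₁ y₂) /
    (∑ c₁ : C₁, ∑ m₁ : M₁, ∑ y₁ : Y₁, ∑ y₂' : Y₂, ℳ.pV c₁ c₂ a₁ a₂ m₁ m₂ y₁ y₂')

end TwoUnitFrontDoor

/-- The interventional distribution `p(Y₂ = y₂ | do(A₁ = a₁, A₂ = a₂))` given by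
the chain-graph g-formula, marginalized over all variables other than `Y₂`. -/
noncomputable def TwoUnitFrontDoor.doY2
    {C₁ C₂ U₁ U₂ A₁ A₂ M₁ M₂ Y₁ Y₂ : Type}
    [Fintype C₁] [Fintype C₂] [Fintype U₁] [Fintype U₂] [Fintype A₁] [Fintype A₂]
    [Fintype M₁] [Fintype M₂] [Fintype Y₁] [Fintype Y₂]
    [Nonempty C₁] [Nonempty C₂] [Nonempty U₁] [Nonempty U₂] [Nonempty A₁] [Nonempty A₂]
    [Nonempty M₁] [Nonempty M₂] [Nonempty Y₁] [Nonempty Y₂]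
    (ℳ : TwoUnitFrontDoor C₁ C₂ U₁ U₂ A₁ A₂ M₁ M₂ Y₁ Y₂)
    (y₂ : Y₂) (a₁ : A₁) (a₂ : A₂) : ℝ :=
  ∑ c₁ : C₁, ∑ c₂ : C₂, ∑ u₁ : U₁, ∑ u₂ : U₂, ∑ m₁ : M₁, ∑ m₂ : M₂, ∑ y₁ : Y₁,
    ℳ.pC1 c₁ * ℳ.pC2 c₂ * ℳ.pU1 u₁ * ℳ.pU2 u₂ * ℳ.pM m₁ m₂ a₁ a₂ c₁ c₂ *
      ℳ.pY1 y₁ c₁ u₁ m₁ a₂ * ℳ.pY2 y₂ c₂ u₂ m₂ a₁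

namespace TwoUnitFrontDoor

section Aux

variable {C₁ C₂ U₁ U₂ A₁ A₂ M₁ M₂ Y₁ Y₂ : Type}
    [Fintype C₁] [Fintype C₂] [Fintype U₁] [Fintype U₂] [Fintype A₁] [Fintype A₂]
    [Fintype M₁] [Fintype M₂] [Fintype Y₁] [Fintype Y₂]
    [Nonempty C₁] [Nonempty C₂] [Nonempty U₁] [Nonempty U₂] [Nonempty A₁] [Nonempty A₂]
    [Nonempty M₁] [Nonempty M₂] [Nonempty Y₁] [Nonempty Y₂]
    (ℳ : TwoUnitFrontDoor C₁ C₂ U₁ U₂ A₁ A₂ M₁ M₂ Y₁ Y₂)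

/-- `p(a₁ | c₁)` in model terms. -/
def f1 (a₁ : A₁) (c₁ : C₁) : ℝ := ∑ u₁, ℳ.pU1 u₁ * ℳ.pA1 a₁ c₁ u₁

def f2 (a₂ : A₂) (c₂ : C₂) : ℝ := ∑ u₂, ℳ.pU2 u₂ * ℳ.pA2 a₂ c₂ u₂

def G1f (y₁ : Y₁) (a₁ : A₁) (c₁ : C₁) (m₁ : M₁) (a₂ : A₂) : ℝ :=
  ∑ u₁, ℳ.pU1 u₁ * ℳ.pA1 a₁ c₁ u₁ * ℳ.pY1 y₁ c₁ u₁ m₁ a₂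

def G2f (y₂ : Y₂) (a₂ : A₂) (c₂ : C₂) (m₂ : M₂) (a₁ : A₁) : ℝ :=
  ∑ u₂, ℳ.pU2 u₂ * ℳ.pA2 a₂ c₂ u₂ * ℳ.pY2 y₂ c₂ u₂ m₂ a₁

def H2f (y₂ : Y₂) (c₂ : C₂) (m₂ : M₂) (a₁ : A₁) : ℝ :=
  ∑ u₂, ℳ.pU2 u₂ * ℳ.pY2 y₂ c₂ u₂ m₂ a₁

lemma sum_f1 (c₁ : C₁) : ∑ a₁, ℳ.f1 a₁ c₁ = 1 := by
  simp only [f1]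
  rw [Finset.sum_comm]
  simp only [← Finset.mul_sum, ℳ.pA1_sum, mul_one, ℳ.pU1_sum]

lemma sum_f2 (c₂ : C₂) : ∑ a₂, ℳ.f2 a₂ c₂ = 1 := by
  simp only [f2]
  rw [Finset.sum_comm]
  simp only [← Finset.mul_sum, ℳ.pA2_sum, mul_one, ℳ.pU2_sum]

lemma sum_G1 (a₁ : A₁) (c₁ : C₁) (m₁ : M₁) (a₂ : A₂) :
    ∑ y₁, ℳ.G1f y₁ a₁ c₁ m₁ a₂ = ℳ.f1 a₁ c₁ := by
  simp only [G1f, f1]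
  rw [Finset.sum_comm]
  simp only [← Finset.mul_sum, ℳ.pY1_sum, mul_one]

lemma sum_G2 (a₂ : A₂) (c₂ : C₂) (m₂ : M₂) (a₁ : A₁) (y₂ : Y₂) :
    ∑ y₂' : Y₂, ℳ.G2f y₂' a₂ c₂ m₂ a₁ = ℳ.f2 a₂ c₂ := by
  simp only [G2f, f2]
  rw [Finset.sum_comm]
  simp only [← Finset.mul_sum, ℳ.pY2_sum, mul_one]

lemma sumA_G2 (y₂ : Y₂) (c₂ : C₂) (m₂ : M₂) (a₁ : A₁) :
    ∑ α₂ : A₂, ℳ.G2f y₂ α₂ c₂ m₂ a₁ = ℳ.H2f y₂ c₂ m₂ a₁ := by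
  simp only [G2f, H2f]
  rw [Finset.sum_comm]
  refine Finset.sum_congr rfl fun u₂ _ => ?_
  calc ∑ α₂ : A₂, ℳ.pU2 u₂ * ℳ.pA2 α₂ c₂ u₂ * ℳ.pY2 y₂ c₂ u₂ m₂ a₁
      = (ℳ.pU2 u₂ * ℳ.pY2 y₂ c₂ u₂ m₂ a₁) * ∑ α₂ : A₂, ℳ.pA2 α₂ c₂ u₂ := by
        rw [Finset.mul_sum]; exact Finset.sum_congr rfl fun _ _ => by ring
    _ = _ := by rw [ℳ.pA2_sum, mul_one]

lemma pV_eq (c₁ : C₁) (c₂ : C₂) (a₁ : A₁) (a₂ : A₂) (m₁ : M₁) (m₂ : M₂)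
    (y₁ : Y₁) (y₂ : Y₂) :
    ℳ.pV c₁ c₂ a₁ a₂ m₁ m₂ y₁ y₂ =
      ℳ.pC1 c₁ * ℳ.pC2 c₂ * ℳ.pM m₁ m₂ a₁ a₂ c₁ c₂ *
        ℳ.G1f y₁ a₁ c₁ m₁ a₂ * ℳ.G2f y₂ a₂ c₂ m₂ a₁ := by
  simp only [pV, joint, G1f, G2f, Finset.mul_sum, Finset.sum_mul]
  rw [Finset.sum_comm]
  exact Finset.sum_congr rfl fun u₂ _ => Finset.sum_congr rfl fun u₁ _ => by ring

lemma sum_y1_pV (c₁ : C₁) (c₂ : C₂) (a₁ : A₁) (a₂ : A₂) (m₁ : M₁) (m₂ : M₂) (y₂ : Y₂) :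
    ∑ y₁, ℳ.pV c₁ c₂ a₁ a₂ m₁ m₂ y₁ y₂ =
      ℳ.pC1 c₁ * ℳ.pC2 c₂ * ℳ.f1 a₁ c₁ * ℳ.pM m₁ m₂ a₁ a₂ c₁ c₂ *
        ℳ.G2f y₂ a₂ c₂ m₂ a₁ := by
  simp only [pV_eq]
  calc (∑ y₁, ℳ.pC1 c₁ * ℳ.pC2 c₂ * ℳ.pM m₁ m₂ a₁ a₂ c₁ c₂ *
          ℳ.G1f y₁ a₁ c₁ m₁ a₂ * ℳ.G2f y₂ a₂ c₂ m₂ a₁)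
      = (ℳ.pC1 c₁ * ℳ.pC2 c₂ * ℳ.pM m₁ m₂ a₁ a₂ c₁ c₂ * ℳ.G2f y₂ a₂ c₂ m₂ a₁) *
          ∑ y₁, ℳ.G1f y₁ a₁ c₁ m₁ a₂ := by
        rw [Finset.mul_sum]; exact Finset.sum_congr rfl fun _ _ => by ring
    _ = _ := by rw [ℳ.sum_G1]; ring

lemma sum_y12_pV (c₁ : C₁) (c₂ : C₂) (a₁ : A₁) (a₂ : A₂) (m₁ : M₁) (m₂ : M₂) :
    ∑ y₁, ∑ y₂, ℳ.pV c₁ c₂ a₁ a₂ m₁ m₂ y₁ y₂ =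
      ℳ.pC1 c₁ * ℳ.pC2 c₂ * ℳ.f1 a₁ c₁ * ℳ.f2 a₂ c₂ * ℳ.pM m₁ m₂ a₁ a₂ c₁ c₂ := by
  rw [Finset.sum_comm]
  simp only [sum_y1_pV]
  calc (∑ y₂, ℳ.pC1 c₁ * ℳ.pC2 c₂ * ℳ.f1 a₁ c₁ * ℳ.pM m₁ m₂ a₁ a₂ c₁ c₂ *
          ℳ.G2f y₂ a₂ c₂ m₂ a₁)
      = (ℳ.pC1 c₁ * ℳ.pC2 c₂ * ℳ.f1 a₁ c₁ * ℳ.pM m₁ m₂ a₁ a₂ c₁ c₂) *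
          ∑ y₂' : Y₂, ℳ.G2f y₂' a₂ c₂ m₂ a₁ := by
        rw [Finset.mul_sum]
    _ = _ := by rw [ℳ.sum_G2 a₂ c₂ m₂ a₁ (Classical.arbitrary Y₂)]; ring

lemma sum_pM_const (A : ℝ) (a₁ : A₁) (a₂ : A₂) (c₁ : C₁) (c₂ : C₂) :
    ∑ m₁, ∑ m₂, A * ℳ.pM m₁ m₂ a₁ a₂ c₁ c₂ = A := by
  simp only [← Finset.mul_sum]
  rw [ℳ.pM_sum, mul_one]

lemma sum_f2_const (A : ℝ) (c₂ : C₂) : ∑ a₂, A * ℳ.f2 a₂ c₂ = A := by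
  rw [← Finset.mul_sum, ℳ.sum_f2, mul_one]

lemma sum_f1_const (A : ℝ) (c₁ : C₁) : ∑ a₁, A * ℳ.f1 a₁ c₁ = A := by
  rw [← Finset.mul_sum, ℳ.sum_f1, mul_one]

lemma sum_f1_const' (A B : ℝ) (c₁ : C₁) : ∑ a₁, A * ℳ.f1 a₁ c₁ * B = A * B := by
  calc ∑ a₁, A * ℳ.f1 a₁ c₁ * B = ∑ a₁, (A * B) * ℳ.f1 a₁ c₁ :=
        Finset.sum_congr rfl fun _ _ => by ring
    _ = A * B := ℳ.sum_f1_const _ _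

lemma sum_pC1_mul (B : ℝ) : ∑ c₁, ℳ.pC1 c₁ * B = B := by
  rw [← Finset.sum_mul, ℳ.pC1_sum, one_mul]

lemma sum_pC2_const (A : ℝ) : ∑ c₂, A * ℳ.pC2 c₂ = A := by
  rw [← Finset.mul_sum, ℳ.pC2_sum, mul_one]

lemma f1_pos (hpos : ℳ.StrictlyPositive) (a₁ : A₁) (c₁ : C₁) : 0 < ℳ.f1 a₁ c₁ := by
  obtain ⟨-, -, h3, -, h5, -⟩ := hpos
  exact Finset.sum_pos (fun u _ => mul_pos (h3 u) (h5 a₁ c₁ u)) Finset.univ_nonempty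

lemma f2_pos (hpos : ℳ.StrictlyPositive) (a₂ : A₂) (c₂ : C₂) : 0 < ℳ.f2 a₂ c₂ := by
  obtain ⟨-, -, -, h4, -, h6, -⟩ := hpos
  exact Finset.sum_pos (fun u _ => mul_pos (h4 u) (h6 a₂ c₂ u)) Finset.univ_nonempty

lemma pVm_eq (hpos : ℳ.StrictlyPositive) (m₁ : M₁) (m₂ : M₂) (a₁ : A₁) (a₂ : A₂)
    (c₁ : C₁) (c₂ : C₂) :
    ℳ.pVm m₁ m₂ a₁ a₂ c₁ c₂ = ℳ.pM m₁ m₂ a₁ a₂ c₁ c₂ := by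
  have h1 := hpos.1
  have h2 := hpos.2.1
  have hA : 0 < ℳ.pC1 c₁ * ℳ.pC2 c₂ * ℳ.f1 a₁ c₁ * ℳ.f2 a₂ c₂ :=
    mul_pos (mul_pos (mul_pos (h1 c₁) (h2 c₂)) (ℳ.f1_pos hpos a₁ c₁)) (ℳ.f2_pos hpos a₂ c₂)
  rw [pVm, sum_y12_pV]
  simp only [sum_y12_pV, sum_pM_const]
  rw [mul_div_cancel_left₀ _ hA.ne']

lemma pVc1_eq (c₁ : C₁) : ℳ.pVc1 c₁ = ℳ.pC1 c₁ := by
  rw [pVc1]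
  simp only [sum_y12_pV, sum_pM_const, sum_f2_const, sum_f1_const, sum_pC2_const]

lemma pVc2_eq (c₂ : C₂) : ℳ.pVc2 c₂ = ℳ.pC2 c₂ := by
  rw [pVc2]
  simp only [sum_y12_pV, sum_pM_const, sum_f2_const]
  calc ∑ c₁, ∑ a₁, ℳ.pC1 c₁ * ℳ.pC2 c₂ * ℳ.f1 a₁ c₁
      = ∑ c₁, ℳ.pC1 c₁ * ℳ.pC2 c₂ := by
        refine Finset.sum_congr rfl fun c₁ _ => ?_
        exact ℳ.sum_f1_const _ _
    _ = ℳ.pC2 c₂ := ℳ.sum_pC1_mul _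

lemma pVa2_eq (hpos : ℳ.StrictlyPositive) (α₂ : A₂) (c₂ : C₂) :
    ℳ.pVa2 α₂ c₂ = ℳ.f2 α₂ c₂ := by
  have h2 := hpos.2.1
  rw [pVa2, ℳ.pVc2_eq]
  have hnum : (∑ c₁, ∑ a₁, ∑ m₁, ∑ m₂, ∑ y₁, ∑ y₂,
      ℳ.pV c₁ c₂ a₁ α₂ m₁ m₂ y₁ y₂) = ℳ.pC2 c₂ * ℳ.f2 α₂ c₂ := by
    simp only [sum_y12_pV, sum_pM_const, sum_f1_const']
    calc ∑ c₁, ℳ.pC1 c₁ * ℳ.pC2 c₂ * ℳ.f2 α₂ c₂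
        = ∑ c₁, ℳ.pC1 c₁ * (ℳ.pC2 c₂ * ℳ.f2 α₂ c₂) :=
          Finset.sum_congr rfl fun _ _ => by ring
      _ = _ := ℳ.sum_pC1_mul _
  rw [hnum, mul_div_cancel_left₀ _ (h2 c₂).ne']

lemma pVy2_eq (hpos : ℳ.StrictlyPositive) (y₂ : Y₂) (a₁ : A₁) (α₂ : A₂)
    (m₂ : M₂) (c₂ : C₂) :
    ℳ.pVy2 y₂ a₁ α₂ m₂ c₂ = ℳ.G2f y₂ α₂ c₂ m₂ a₁ / ℳ.f2 α₂ c₂ := by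
  have h1 := hpos.1
  have h2 := hpos.2.1
  have h7 := hpos.2.2.2.2.2.2.1
  set T : ℝ := ∑ c₁, ∑ m₁, ℳ.pC1 c₁ * ℳ.f1 a₁ c₁ * ℳ.pM m₁ m₂ a₁ α₂ c₁ c₂ with hT
  have hTpos : 0 < T := by
    refine Finset.sum_pos (fun c₁ _ => ?_) Finset.univ_nonempty
    refine Finset.sum_pos (fun m₁ _ => ?_) Finset.univ_nonempty
    exact mul_pos (mul_pos (h1 c₁) (ℳ.f1_pos hpos a₁ c₁)) (h7 m₁ m₂ a₁ α₂ c₁ c₂)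
  have hnum : (∑ c₁, ∑ m₁, ∑ y₁, ℳ.pV c₁ c₂ a₁ α₂ m₁ m₂ y₁ y₂)
      = ℳ.pC2 c₂ * ℳ.G2f y₂ α₂ c₂ m₂ a₁ * T := by
    rw [hT]
    simp only [sum_y1_pV, Finset.mul_sum]
    exact Finset.sum_congr rfl fun c₁ _ => Finset.sum_congr rfl fun m₁ _ => by ring
  have hden : (∑ c₁, ∑ m₁, ∑ y₁, ∑ y₂', ℳ.pV c₁ c₂ a₁ α₂ m₁ m₂ y₁ y₂')
      = ℳ.pC2 c₂ * ℳ.f2 α₂ c₂ * T := by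
    rw [hT]
    simp only [sum_y12_pV, Finset.mul_sum]
    exact Finset.sum_congr rfl fun c₁ _ => Finset.sum_congr rfl fun m₁ _ => by ring
  rw [pVy2, hnum, hden]
  rw [mul_comm (ℳ.pC2 c₂) (ℳ.G2f y₂ α₂ c₂ m₂ a₁), mul_comm (ℳ.pC2 c₂) (ℳ.f2 α₂ c₂)]
  rw [mul_div_mul_right _ _ hTpos.ne', mul_div_mul_right _ _ (h2 c₂).ne']

lemma sum_alpha (hpos : ℳ.StrictlyPositive) (y₂ : Y₂) (a₁ : A₁) (m₂ : M₂) (c₂ : C₂) :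
    ∑ α₂ : A₂, ℳ.pVy2 y₂ a₁ α₂ m₂ c₂ * ℳ.pVa2 α₂ c₂ = ℳ.H2f y₂ c₂ m₂ a₁ := by
  rw [← ℳ.sumA_G2 y₂ c₂ m₂ a₁]
  refine Finset.sum_congr rfl fun α₂ _ => ?_
  rw [ℳ.pVy2_eq hpos, ℳ.pVa2_eq hpos,
    div_mul_cancel₀ _ (ℳ.f2_pos hpos α₂ c₂).ne']

lemma sum_pY1_const (A B : ℝ) (c₁ : C₁) (u₁ : U₁) (m₁ : M₁) (a₂ : A₂) :
    ∑ y₁, A * ℳ.pY1 y₁ c₁ u₁ m₁ a₂ * B = A * B := by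
  calc ∑ y₁, A * ℳ.pY1 y₁ c₁ u₁ m₁ a₂ * B
      = ∑ y₁, (A * B) * ℳ.pY1 y₁ c₁ u₁ m₁ a₂ :=
        Finset.sum_congr rfl fun _ _ => by ring
    _ = (A * B) * ∑ y₁, ℳ.pY1 y₁ c₁ u₁ m₁ a₂ := by rw [Finset.mul_sum]
    _ = A * B := by rw [ℳ.pY1_sum, mul_one]

lemma doY2_eq (y₂ : Y₂) (a₁ : A₁) (a₂ : A₂) :
    ℳ.doY2 y₂ a₁ a₂ =
      ∑ c₁ : C₁, ∑ c₂ : C₂, ∑ m₁ : M₁, ∑ m₂ : M₂,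
        ℳ.pM m₁ m₂ a₁ a₂ c₁ c₂ * ℳ.H2f y₂ c₂ m₂ a₁ * ℳ.pC1 c₁ * ℳ.pC2 c₂ := by
  rw [doY2]
  refine Finset.sum_congr rfl fun c₁ _ => Finset.sum_congr rfl fun c₂ _ => ?_
  simp only [sum_pY1_const]
  -- now : ∑ u₁, ∑ u₂, ∑ m₁, ∑ m₂,
  --   pC1 c₁ * pC2 c₂ * pU1 u₁ * pU2 u₂ * pM m₁ m₂ a₁ a₂ c₁ c₂ * pY2 y₂ c₂ u₂ m₂ a₁
  have step1 : ∀ u₁ : U₁, (∑ u₂, ∑ m₁, ∑ m₂,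
      ℳ.pC1 c₁ * ℳ.pC2 c₂ * ℳ.pU1 u₁ * ℳ.pU2 u₂ * ℳ.pM m₁ m₂ a₁ a₂ c₁ c₂ *
        ℳ.pY2 y₂ c₂ u₂ m₂ a₁) =
      ℳ.pU1 u₁ * ∑ u₂, ∑ m₁, ∑ m₂,
        ℳ.pC1 c₁ * ℳ.pC2 c₂ * ℳ.pU2 u₂ * ℳ.pM m₁ m₂ a₁ a₂ c₁ c₂ *
          ℳ.pY2 y₂ c₂ u₂ m₂ a₁ := by
    intro u₁
    simp only [Finset.mul_sum]
    exact Finset.sum_congr rfl fun _ _ => Finset.sum_congr rfl fun _ _ =>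
      Finset.sum_congr rfl fun _ _ => by ring
  rw [Finset.sum_congr rfl fun u₁ _ => step1 u₁, ← Finset.sum_mul, ℳ.pU1_sum, one_mul]
  rw [Finset.sum_comm]
  refine Finset.sum_congr rfl fun m₁ _ => ?_
  rw [Finset.sum_comm]
  refine Finset.sum_congr rfl fun m₂ _ => ?_
  calc ∑ u₂, ℳ.pC1 c₁ * ℳ.pC2 c₂ * ℳ.pU2 u₂ * ℳ.pM m₁ m₂ a₁ a₂ c₁ c₂ *
        ℳ.pY2 y₂ c₂ u₂ m₂ a₁
      = (ℳ.pC1 c₁ * ℳ.pC2 c₂ * ℳ.pM m₁ m₂ a₁ a₂ c₁ c₂) *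
          ∑ u₂, ℳ.pU2 u₂ * ℳ.pY2 y₂ c₂ u₂ m₂ a₁ := by
        rw [Finset.mul_sum]
        exact Finset.sum_congr rfl fun _ _ => by ring
    _ = _ := by rw [H2f]; ring

end Aux

end TwoUnitFrontDoor

/-- **equation (3) of the paper.** In the two-unit front-door
network model with all kernels strictly positive, for every intervention value
`(a₁, a₂)` and every `y₂`,
`p(Y₂ = y₂ | do(a₁, a₂)) = Σ_{c₁,c₂,m₁,m₂} pV(m₁,m₂ | a₁,a₂,c₁,c₂) ·
  [Σ_{α₂} pV(y₂ | a₁, α₂, m₂, c₂) pV(α₂ | c₂)] · pV(c₁) pV(c₂)`. -/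
theorem TwoUnitFrontDoor.frontdoor_identification
    {C₁ C₂ U₁ U₂ A₁ A₂ M₁ M₂ Y₁ Y₂ : Type}
    [Fintype C₁] [Fintype C₂] [Fintype U₁] [Fintype U₂] [Fintype A₁] [Fintype A₂]
    [Fintype M₁] [Fintype M₂] [Fintype Y₁] [Fintype Y₂]
    [Nonempty C₁] [Nonempty C₂] [Nonempty U₁] [Nonempty U₂] [Nonempty A₁] [Nonempty A₂]
    [Nonempty M₁] [Nonempty M₂] [Nonempty Y₁] [Nonempty Y₂]
    (ℳ : TwoUnitFrontDoor C₁ C₂ U₁ U₂ A₁ A₂ M₁ M₂ Y₁ Y₂)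
    (hpos : ℳ.StrictlyPositive)
    (a₁ : A₁) (a₂ : A₂) (y₂ : Y₂) :
    ℳ.doY2 y₂ a₁ a₂ =
      ∑ c₁ : C₁, ∑ c₂ : C₂, ∑ m₁ : M₁, ∑ m₂ : M₂,
        ℳ.pVm m₁ m₂ a₁ a₂ c₁ c₂ *
          (∑ α₂ : A₂, ℳ.pVy2 y₂ a₁ α₂ m₂ c₂ * ℳ.pVa2 α₂ c₂) *
          ℳ.pVc1 c₁ * ℳ.pVc2 c₂ := by
  calc ℳ.doY2 y₂ a₁ a₂
      = ∑ c₁ : C₁, ∑ c₂ : C₂, ∑ m₁ : M₁, ∑ m₂ : M₂,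
          ℳ.pM m₁ m₂ a₁ a₂ c₁ c₂ * ℳ.H2f y₂ c₂ m₂ a₁ * ℳ.pC1 c₁ * ℳ.pC2 c₂ :=
        ℳ.doY2_eq y₂ a₁ a₂
    _ = _ := by
        refine Finset.sum_congr rfl fun c₁ _ => Finset.sum_congr rfl fun c₂ _ =>
          Finset.sum_congr rfl fun m₁ _ => Finset.sum_congr rfl fun m₂ _ => ?_
        rw [ℳ.pVm_eq hpos, ℳ.sum_alpha hpos, ℳ.pVc1_eq, ℳ.pVc2_eq]
end
end

section
/- In the N-unit front-door network model with all kernels strictly positive, the observed conditional of each unit's outcome given all observed covariates, treatments, and mediators depends only on the unit's own treatment, its neighbors' treatments, its own mediator, and its own covariate: for every unit i and all values, pV(y_i | a, m, c) = pV(y_i | a_i, a_{N_i}, m_i, c_i), where pV(y_i | a, m, c) conditions Y_i on the full observed vectors (a, m, c), pV(y_i | a_i, a_{N_i}, m_i, c_i) conditions Y_i on (A_i = a_i, A_{N_i} = a_{N_i}, M_i = m_i, C_i = c_i), and both are ratios of marginal sums of the observed margin pV. -/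
open scoped Classical

noncomputable section

/-- The `N`-unit front-door network model over the social network `G`: finite
nonempty state spaces `C` (covariates), `U` (unobserved confounders), `A`
(treatments), `M` (mediators) and `Y` (outcomes); priors `pC`, `pU`; treatment
kernels `pA`; a joint mediator block kernel `pM`; and outcome kernels `pY i`
which depend on the treatment vector only through the neighbors of unit `i`.
All kernels are nonnegative and sum to 1 over their first argument. -/
structure FrontDoorNetwork (N : ℕ) (G : SimpleGraph (Fin N))
    (C U A M Y : Type) [Fintype C] [Fintype U] [Fintype A] [Fintype M] [Fintype Y]
    [Nonempty C] [Nonempty U] [Nonempty A] [Nonempty M] [Nonempty Y] where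
  pC : C → ℝ
  pU : U → ℝ
  pA : A → C → U → ℝ
  pM : (Fin N → M) → (Fin N → A) → (Fin N → C) → ℝ
  pY : Fin N → Y → C → U → M → (Fin N → A) → ℝ
  pC_nonneg : ∀ c, 0 ≤ pC c
  pC_sum : ∑ c : C, pC c = 1
  pU_nonneg : ∀ u, 0 ≤ pU u
  pU_sum : ∑ u : U, pU u = 1
  pA_nonneg : ∀ a c u, 0 ≤ pA a c u
  pA_sum : ∀ c u, ∑ a : A, pA a c u = 1
  pM_nonneg : ∀ m a c, 0 ≤ pM m a c
  pM_sum : ∀ a c, ∑ m : Fin N → M, pM m a c = 1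
  pY_nonneg : ∀ i y c u m a, 0 ≤ pY i y c u m a
  pY_sum : ∀ i c u m a, ∑ y : Y, pY i y c u m a = 1
  pY_nbr : ∀ i y c u m (a a' : Fin N → A), (∀ j, G.Adj i j → a j = a' j) →
    pY i y c u m a = pY i y c u m a'

namespace FrontDoorNetwork

variable {N : ℕ} {G : SimpleGraph (Fin N)} {C U A M Y : Type}
    [Fintype C] [Fintype U] [Fintype A] [Fintype M] [Fintype Y]
    [Nonempty C] [Nonempty U] [Nonempty A] [Nonempty M] [Nonempty Y]
    (ℳ : FrontDoorNetwork N G C U A M Y)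

/-- All kernels of the model are strictly positive. -/
def StrictlyPositive : Prop :=
  (∀ c, 0 < ℳ.pC c) ∧ (∀ u, 0 < ℳ.pU u) ∧ (∀ a c u, 0 < ℳ.pA a c u) ∧
  (∀ m a c, 0 < ℳ.pM m a c) ∧ (∀ i y c u m a, 0 < ℳ.pY i y c u m a)

/-- The full joint distribution of the model. -/
def joint (c : Fin N → C) (u : Fin N → U) (a : Fin N → A) (m : Fin N → M)
    (y : Fin N → Y) : ℝ :=
  (∏ i, ℳ.pC (c i) * ℳ.pU (u i) * ℳ.pA (a i) (c i) (u i)) * ℳ.pM m a c *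
    ∏ i, ℳ.pY i (y i) (c i) (u i) (m i) a

/-- The observed margin `pV`, summing out the unobserved confounders. -/
def pV (c : Fin N → C) (a : Fin N → A) (m : Fin N → M) (y : Fin N → Y) : ℝ :=
  ∑ u : Fin N → U, ℳ.joint c u a m y

/-- The observed marginal `pV(a, c)`. -/
def pVac (c : Fin N → C) (a : Fin N → A) : ℝ :=
  ∑ m : Fin N → M, ∑ y : Fin N → Y, ℳ.pV c a m y

/-- The observed conditional `pV(m | a, c)` of the mediator block. -/
def pVm (m : Fin N → M) (a : Fin N → A) (c : Fin N → C) : ℝ :=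
  (∑ y : Fin N → Y, ℳ.pV c a m y) / ℳ.pVac c a

/-- The observed marginal `pV(C_i = cᵢ)` of a single unit's covariate. -/
def pVci (i : Fin N) (cᵢ : C) : ℝ :=
  ∑ c : Fin N → C, ∑ a : Fin N → A, ∑ m : Fin N → M, ∑ y : Fin N → Y,
    if c i = cᵢ then ℳ.pV c a m y else 0

/-- The observed conditional `pV(A_i = α | C_i = cᵢ)` of a single unit's
treatment given its own covariate. -/
def pVai (i : Fin N) (α : A) (cᵢ : C) : ℝ :=
  (∑ c : Fin N → C, ∑ a : Fin N → A, ∑ m : Fin N → M, ∑ y : Fin N → Y,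
    if c i = cᵢ ∧ a i = α then ℳ.pV c a m y else 0) / ℳ.pVci i cᵢ

/-- The observed conditional `pV(Y_i = yᵢ | A_{N_i} = a_{N_i}, A_i = α,
M_i = mᵢ, C_i = cᵢ)`: the outcome of unit `i` conditioned on the treatments
of the neighbors of `i` (as recorded in the vector `a`), its own treatment,
its own mediator and its own covariate. -/
def pVyi (i : Fin N) (yᵢ : Y) (a : Fin N → A) (α : A) (mᵢ : M) (cᵢ : C) : ℝ :=
  (∑ c : Fin N → C, ∑ a' : Fin N → A, ∑ m : Fin N → M, ∑ y : Fin N → Y,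
    if c i = cᵢ ∧ a' i = α ∧ (∀ j, G.Adj i j → a' j = a j) ∧ m i = mᵢ ∧ y i = yᵢ
    then ℳ.pV c a' m y else 0) /
  (∑ c : Fin N → C, ∑ a' : Fin N → A, ∑ m : Fin N → M, ∑ y : Fin N → Y,
    if c i = cᵢ ∧ a' i = α ∧ (∀ j, G.Adj i j → a' j = a j) ∧ m i = mᵢ
    then ℳ.pV c a' m y else 0)

/-- The interventional distribution `p(Y = y | do(A = a))` given by the
chain-graph g-formula, marginalized over `c`, `u` and `m`. -/
def doY (y : Fin N → Y) (a : Fin N → A) : ℝ :=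
  ∑ c : Fin N → C, ∑ u : Fin N → U, ∑ m : Fin N → M,
    (∏ i, ℳ.pC (c i) * ℳ.pU (u i)) * ℳ.pM m a c *
      ∏ i, ℳ.pY i (y i) (c i) (u i) (m i) a

end FrontDoorNetwork

lemma sum_pi_prod {N : ℕ} {Y : Type} [Fintype Y] (g : Fin N → Y → ℝ) :
    ∑ y : Fin N → Y, ∏ j, g j (y j) = ∏ j, ∑ v : Y, g j v :=
  (Fintype.prod_sum g).symm

lemma prod_ite_split {N : ℕ} (f : Fin N → ℝ) (i : Fin N) (x : ℝ) :
    ∏ j, (if j = i then x else f j) = x * ∏ j ∈ Finset.univ.erase i, f j := by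
  rw [← Finset.mul_prod_erase Finset.univ _ (Finset.mem_univ i), if_pos rfl]
  congr 1
  refine Finset.prod_congr rfl fun j hj => ?_
  rw [if_neg (Finset.ne_of_mem_erase hj)]

lemma sum_pi_cond {N : ℕ} {Y : Type} [Fintype Y] (g : Fin N → Y → ℝ) (i : Fin N) (k : Y) :
    ∑ y : Fin N → Y, (if y i = k then ∏ j, g j (y j) else 0)
      = g i k * ∏ j ∈ Finset.univ.erase i, ∑ v : Y, g j v := by
  have h1 : ∀ y : Fin N → Y, (if y i = k then ∏ j, g j (y j) else 0) =
      ∏ j, (if j = i then (if y j = k then g j (y j) else 0) else g j (y j)) := by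
    intro y
    by_cases h : y i = k
    · rw [if_pos h]
      refine (Finset.prod_congr rfl fun j _ => ?_).symm
      by_cases hj : j = i
      · subst hj; simp [h]
      · simp [hj]
    · rw [if_neg h]
      refine (Finset.prod_eq_zero (Finset.mem_univ i) ?_).symm
      simp [h]
  simp_rw [h1]
  rw [sum_pi_prod (fun j v => if j = i then (if v = k then g j v else 0) else g j v)]
  have h2 : ∀ j : Fin N, (∑ v : Y, if j = i then (if v = k then g j v else 0) else g j v)
      = if j = i then g i k else ∑ v : Y, g j v := by
    intro j
    by_cases hj : j = i
    · subst hj; simp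
    · simp [hj]
  simp_rw [h2]
  exact prod_ite_split _ i _

namespace FrontDoorNetwork

variable {N : ℕ} {G : SimpleGraph (Fin N)} {C U A M Y : Type}
    [Fintype C] [Fintype U] [Fintype A] [Fintype M] [Fintype Y]
    [Nonempty C] [Nonempty U] [Nonempty A] [Nonempty M] [Nonempty Y]
    (ℳ : FrontDoorNetwork N G C U A M Y)

/-- Auxiliary kernel: `∑ u, pU(u) pA(a|c,u) pY_j(y|c,u,m,a)`. -/
def Qk (j : Fin N) (v : Y) (cj : C) (aj : A) (mj : M) (a : Fin N → A) : ℝ :=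
  ∑ u : U, ℳ.pU u * ℳ.pA aj cj u * ℳ.pY j v cj u mj a

/-- Auxiliary kernel: `∑ u, pU(u) pA(a|c,u)`. -/
def Dk (cj : C) (aj : A) : ℝ :=
  ∑ u : U, ℳ.pU u * ℳ.pA aj cj u

lemma Qk_sum (j : Fin N) (cj : C) (aj : A) (mj : M) (a : Fin N → A) :
    ∑ v : Y, ℳ.Qk j v cj aj mj a = ℳ.Dk cj aj := by
  unfold Qk Dk
  rw [Finset.sum_comm]
  refine Finset.sum_congr rfl fun u _ => ?_
  rw [← Finset.mul_sum, ℳ.pY_sum, mul_one]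

lemma Qk_nbr (j : Fin N) (v : Y) (cj : C) (aj : A) (mj : M) (a a' : Fin N → A)
    (h : ∀ l, G.Adj j l → a l = a' l) :
    ℳ.Qk j v cj aj mj a = ℳ.Qk j v cj aj mj a' := by
  unfold Qk
  refine Finset.sum_congr rfl fun u _ => ?_
  rw [ℳ.pY_nbr j v cj u mj a a' h]

lemma Qk_pos (hpos : ℳ.StrictlyPositive) (j : Fin N) (v : Y) (cj : C) (aj : A)
    (mj : M) (a : Fin N → A) : 0 < ℳ.Qk j v cj aj mj a :=
  Finset.sum_pos (fun u _ => mul_pos (mul_pos (hpos.2.1 u) (hpos.2.2.1 aj cj u))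
    (hpos.2.2.2.2 j v cj u mj a)) Finset.univ_nonempty

lemma Dk_pos (hpos : ℳ.StrictlyPositive) (cj : C) (aj : A) : 0 < ℳ.Dk cj aj :=
  Finset.sum_pos (fun u _ => mul_pos (hpos.2.1 u) (hpos.2.2.1 aj cj u))
    Finset.univ_nonempty

lemma pV_eq (c : Fin N → C) (a : Fin N → A) (m : Fin N → M) (y : Fin N → Y) :
    ℳ.pV c a m y = ℳ.pM m a c * ∏ j, (ℳ.pC (c j) * ℳ.Qk j (y j) (c j) (a j) (m j) a) := by
  unfold pV joint
  have step : ∀ u : Fin N → U,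
      (∏ j, ℳ.pC (c j) * ℳ.pU (u j) * ℳ.pA (a j) (c j) (u j)) * ℳ.pM m a c *
        ∏ j, ℳ.pY j (y j) (c j) (u j) (m j) a
      = ℳ.pM m a c * ∏ j, (ℳ.pC (c j) *
          (ℳ.pU (u j) * ℳ.pA (a j) (c j) (u j) * ℳ.pY j (y j) (c j) (u j) (m j) a)) := by
    intro u
    rw [mul_right_comm, ← Finset.prod_mul_distrib, mul_comm]
    congr 1
    exact Finset.prod_congr rfl fun j _ => by ring
  simp_rw [step, ← Finset.mul_sum]
  congr 1
  rw [sum_pi_prod (fun j v => ℳ.pC (c j) *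
      (ℳ.pU v * ℳ.pA (a j) (c j) v * ℳ.pY j (y j) (c j) v (m j) a))]
  exact Finset.prod_congr rfl fun j _ => by rw [← Finset.mul_sum]; rfl

lemma sum_pV (i : Fin N) (c : Fin N → C) (a : Fin N → A) (m : Fin N → M) :
    ∑ y : Fin N → Y, ℳ.pV c a m y
      = ℳ.pM m a c * (ℳ.pC (c i) * ℳ.Dk (c i) (a i)) *
          ∏ j ∈ Finset.univ.erase i, (ℳ.pC (c j) * ℳ.Dk (c j) (a j)) := by
  simp_rw [pV_eq, ← Finset.mul_sum,
    sum_pi_prod (fun j v => ℳ.pC (c j) * ℳ.Qk j v (c j) (a j) (m j) a)]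
  have h : ∀ j : Fin N, (∑ v : Y, ℳ.pC (c j) * ℳ.Qk j v (c j) (a j) (m j) a)
      = ℳ.pC (c j) * ℳ.Dk (c j) (a j) := by
    intro j; rw [← Finset.mul_sum, ℳ.Qk_sum]
  simp_rw [h]
  rw [← Finset.mul_prod_erase Finset.univ _ (Finset.mem_univ i)]
  ring

lemma sum_pV_cond (i : Fin N) (yᵢ : Y) (c : Fin N → C) (a : Fin N → A) (m : Fin N → M) :
    ∑ y : Fin N → Y, (if y i = yᵢ then ℳ.pV c a m y else 0)
      = ℳ.pM m a c * (ℳ.pC (c i) * ℳ.Qk i yᵢ (c i) (a i) (m i) a) *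
          ∏ j ∈ Finset.univ.erase i, (ℳ.pC (c j) * ℳ.Dk (c j) (a j)) := by
  have h0 : ∀ y : Fin N → Y, (if y i = yᵢ then ℳ.pV c a m y else 0)
      = ℳ.pM m a c * (if y i = yᵢ then
          ∏ j, (ℳ.pC (c j) * ℳ.Qk j (y j) (c j) (a j) (m j) a) else 0) := by
    intro y
    by_cases h : y i = yᵢ
    · rw [if_pos h, if_pos h, pV_eq]
    · simp [h]
  simp_rw [h0, ← Finset.mul_sum]
  rw [sum_pi_cond (fun j v => ℳ.pC (c j) * ℳ.Qk j v (c j) (a j) (m j) a) i yᵢ]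
  have h : ∀ j : Fin N, (∑ v : Y, ℳ.pC (c j) * ℳ.Qk j v (c j) (a j) (m j) a)
      = ℳ.pC (c j) * ℳ.Dk (c j) (a j) := by
    intro j; rw [← Finset.mul_sum, ℳ.Qk_sum]
  simp_rw [h, mul_assoc]


end FrontDoorNetwork

/-- In the `N`-unit front-door network model with all kernels
strictly positive, the observed conditional of each unit's outcome given all
observed covariates, treatments and mediators depends only on the unit's own
treatment, its neighbors' treatments, its own mediator and its own covariate:
`pV(y_i | a, m, c) = pV(y_i | a_i, a_{N_i}, m_i, c_i)`. -/
theorem FrontDoorNetwork.outcome_local_markov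
    {N : ℕ} {G : SimpleGraph (Fin N)} {C U A M Y : Type}
    [Fintype C] [Fintype U] [Fintype A] [Fintype M] [Fintype Y]
    [Nonempty C] [Nonempty U] [Nonempty A] [Nonempty M] [Nonempty Y]
    (ℳ : FrontDoorNetwork N G C U A M Y)
    (hpos : ℳ.StrictlyPositive)
    (i : Fin N) (c : Fin N → C) (a : Fin N → A) (m : Fin N → M) (yᵢ : Y) :
    -- `pV(Y_i = yᵢ | a, m, c)`, conditioning on the full observed vectors:
    (∑ y : Fin N → Y, if y i = yᵢ then ℳ.pV c a m y else 0) /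
        (∑ y : Fin N → Y, ℳ.pV c a m y)
      =
    -- `pV(Y_i = yᵢ | A_i = a_i, A_{N_i} = a_{N_i}, M_i = m_i, C_i = c_i)`:
    ℳ.pVyi i yᵢ a (a i) (m i) (c i) := by
  obtain ⟨hC, hU, hA, hM, hY⟩ := hpos
  have hDpos : ∀ cj aj, 0 < ℳ.Dk cj aj := ℳ.Dk_pos ⟨hC, hU, hA, hM, hY⟩
  have hQpos : ∀ j v cj aj mj a', 0 < ℳ.Qk j v cj aj mj a' :=
    ℳ.Qk_pos ⟨hC, hU, hA, hM, hY⟩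
  have hF : ∀ (c' : Fin N → C) (a' : Fin N → A) (m' : Fin N → M),
      0 < ℳ.pM m' a' c' * ℳ.pC (c i) *
        ∏ j ∈ Finset.univ.erase i, (ℳ.pC (c' j) * ℳ.Dk (c' j) (a' j)) :=
    fun c' a' m' => mul_pos (mul_pos (hM _ _ _) (hC _))
      (Finset.prod_pos fun j _ => mul_pos (hC _) (hDpos _ _))
  have hterm : ∀ (c' : Fin N → C) (a' : Fin N → A) (m' : Fin N → M),
      0 ≤ (if c' i = c i ∧ a' i = a i ∧ (∀ j, G.Adj i j → a' j = a j) ∧ m' i = m i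
        then ℳ.pM m' a' c' * ℳ.pC (c i) *
          ∏ j ∈ Finset.univ.erase i, (ℳ.pC (c' j) * ℳ.Dk (c' j) (a' j)) else 0) := by
    intro c' a' m'
    split_ifs
    · exact (hF c' a' m').le
    · exact le_rfl
  -- the common factor `S`
  have hS : 0 < ∑ c' : Fin N → C, ∑ a' : Fin N → A, ∑ m' : Fin N → M,
      (if c' i = c i ∧ a' i = a i ∧ (∀ j, G.Adj i j → a' j = a j) ∧ m' i = m i
        then ℳ.pM m' a' c' * ℳ.pC (c i) *
          ∏ j ∈ Finset.univ.erase i, (ℳ.pC (c' j) * ℳ.Dk (c' j) (a' j)) else 0) := by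
    refine Finset.sum_pos' (fun c' _ => Finset.sum_nonneg fun a' _ =>
      Finset.sum_nonneg fun m' _ => hterm c' a' m') ⟨c, Finset.mem_univ c, ?_⟩
    refine Finset.sum_pos' (fun a' _ => Finset.sum_nonneg fun m' _ => hterm c a' m')
      ⟨a, Finset.mem_univ a, ?_⟩
    refine Finset.sum_pos' (fun m' _ => hterm c a m') ⟨m, Finset.mem_univ m, ?_⟩
    rw [if_pos ⟨rfl, rfl, fun j _ => rfl, rfl⟩]
    exact hF c a m
  -- numerator of `pVyi`
  have hnum : ∀ (c' : Fin N → C) (a' : Fin N → A) (m' : Fin N → M),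
      (∑ y : Fin N → Y, if c' i = c i ∧ a' i = a i ∧ (∀ j, G.Adj i j → a' j = a j) ∧
          m' i = m i ∧ y i = yᵢ then ℳ.pV c' a' m' y else 0)
      = ℳ.Qk i yᵢ (c i) (a i) (m i) a *
        (if c' i = c i ∧ a' i = a i ∧ (∀ j, G.Adj i j → a' j = a j) ∧ m' i = m i
          then ℳ.pM m' a' c' * ℳ.pC (c i) *
            ∏ j ∈ Finset.univ.erase i, (ℳ.pC (c' j) * ℳ.Dk (c' j) (a' j)) else 0) := by
    intro c' a' m'
    by_cases h : c' i = c i ∧ a' i = a i ∧ (∀ j, G.Adj i j → a' j = a j) ∧ m' i = m i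
    · obtain ⟨h1, h2, h3, h4⟩ := h
      have hy : ∀ y : Fin N → Y,
          (if c' i = c i ∧ a' i = a i ∧ (∀ j, G.Adj i j → a' j = a j) ∧
            m' i = m i ∧ y i = yᵢ then ℳ.pV c' a' m' y else 0)
          = (if y i = yᵢ then ℳ.pV c' a' m' y else 0) := by
        intro y
        by_cases hy' : y i = yᵢ
        · rw [if_pos ⟨h1, h2, h3, h4, hy'⟩, if_pos hy']
        · rw [if_neg (fun hc => hy' hc.2.2.2.2), if_neg hy']
      simp_rw [hy]
      rw [ℳ.sum_pV_cond i yᵢ c' a' m', if_pos ⟨h1, h2, h3, h4⟩]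
      rw [h1, h2, h4, ℳ.Qk_nbr i yᵢ (c i) (a i) (m i) a' a h3]
      ring
    · have hy : ∀ y : Fin N → Y,
          (if c' i = c i ∧ a' i = a i ∧ (∀ j, G.Adj i j → a' j = a j) ∧
            m' i = m i ∧ y i = yᵢ then ℳ.pV c' a' m' y else 0) = 0 := by
        intro y
        exact if_neg (fun hc => h ⟨hc.1, hc.2.1, hc.2.2.1, hc.2.2.2.1⟩)
      simp_rw [hy]
      rw [if_neg h, mul_zero, Finset.sum_const_zero]
  -- denominator of `pVyi`
  have hden : ∀ (c' : Fin N → C) (a' : Fin N → A) (m' : Fin N → M),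
      (∑ y : Fin N → Y, if c' i = c i ∧ a' i = a i ∧ (∀ j, G.Adj i j → a' j = a j) ∧
          m' i = m i then ℳ.pV c' a' m' y else 0)
      = ℳ.Dk (c i) (a i) *
        (if c' i = c i ∧ a' i = a i ∧ (∀ j, G.Adj i j → a' j = a j) ∧ m' i = m i
          then ℳ.pM m' a' c' * ℳ.pC (c i) *
            ∏ j ∈ Finset.univ.erase i, (ℳ.pC (c' j) * ℳ.Dk (c' j) (a' j)) else 0) := by
    intro c' a' m'
    by_cases h : c' i = c i ∧ a' i = a i ∧ (∀ j, G.Adj i j → a' j = a j) ∧ m' i = m i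
    · obtain ⟨h1, h2, h3, h4⟩ := h
      simp_rw [if_pos (⟨h1, h2, h3, h4⟩ :
        c' i = c i ∧ a' i = a i ∧ (∀ j, G.Adj i j → a' j = a j) ∧ m' i = m i)]
      rw [ℳ.sum_pV i c' a' m', h1, h2]
      ring
    · simp_rw [if_neg h]
      rw [mul_zero, Finset.sum_const_zero]
  rw [ℳ.sum_pV_cond i yᵢ c a m, ℳ.sum_pV i c a m]
  rw [FrontDoorNetwork.pVyi]
  simp_rw [hnum, hden, ← Finset.mul_sum]
  rw [mul_div_mul_right _ _ hS.ne']
  have hPpos : 0 < ∏ j ∈ Finset.univ.erase i, (ℳ.pC (c j) * ℳ.Dk (c j) (a j)) :=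
    Finset.prod_pos fun j _ => mul_pos (hC _) (hDpos _ _)
  have h1 := hM m a c
  have h2 := hC (c i)
  have h3 := hDpos (c i) (a i)
  field_simp
end
end
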